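/- arXiv:2309.08425 — 2 statements merged into one kernel-verified Lean document; each statement's English description precedes it below -/
import Mathlib

section
/- Let Q be a very symmetric quiver with A edges from a to b for all vertices a,b ∈ I. Let d ∈ ℕ^I and let λ be the antidominant cocharacter corresponding to a decomposition d = d_1 + d_2. Then the sum of the T(d)-weights of R(d) on which λ acts with positive weight equals A(\underline{d}_2 σ_{d_1} − \underline{d}_1 σ_{d_2}), where σ_{d_i} = ∑_{a∈I} ∑_{j in the d_i-block} β^a_j and \underline{d}_i = ∑_{a∈I} d_i^a. In particular, R(d)^{λ>0} (viewed as a sum of weights) is a ℝ-linear combination of the Weyl-invariant weights τ_{d_1}, τ_{d_2}. -/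
open Finset

lemma card_lt_block (n m : ℕ) : (univ.filter (fun i : Fin (n+m) => i.val < n)).card = n := by
  rw [Finset.card_filter, Fin.sum_univ_eq_sum_range (fun i => if i < n then 1 else 0),
    ← Finset.card_filter]
  have : (range (n+m)).filter (fun i => i < n) = range n := by
    ext i; simp only [mem_filter, mem_range]; omega
  rw [this, Finset.card_range]

lemma card_ge_block (n m : ℕ) : (univ.filter (fun i : Fin (n+m) => n ≤ i.val)).card = m := by
  rw [Finset.card_filter, Fin.sum_univ_eq_sum_range (fun i => if n ≤ i then 1 else 0),
    ← Finset.card_filter]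
  have : (range (n+m)).filter (fun i => n ≤ i) = (range (n+m)) \ range n := by
    ext i; simp only [mem_filter, mem_range, mem_sdiff, not_lt]
  rw [this, Finset.card_sdiff_of_subset (by apply Finset.range_subset_range.2; omega)]
  simp

/-- For a very symmetric quiver with `A` edges between any two vertices and the
antidominant cocharacter `λ` corresponding to `d = d₁ + d₂`, the sum of the `T(d)`-weights of
`R(d)` on which `λ` acts positively equals `A(\underline{d}₂ σ_{d₁} − \underline{d}₁ σ_{d₂})`;
in particular it is an ℝ-linear combination of `τ_{d₁} = σ_{d₁}/\underline{d}₁` and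
`τ_{d₂} = σ_{d₂}/\underline{d}₂`. -/
theorem stmt1 {I : Type} [Fintype I] [DecidableEq I]
    (A : ℕ) (hA : 1 ≤ A)
    (d1 d2 : I → ℕ) (hd1 : d1 ≠ 0) (hd2 : d2 ≠ 0)
    -- the basis weights β^a_i
    (e : ((a : I) × Fin (d1 a + d2 a)) → ((a : I) × Fin (d1 a + d2 a)) → ℝ)
    (he : ∀ x y, e x y = if y = x then 1 else 0)
    -- σ_{d1} and σ_{d2}
    (σ1 σ2 : ((a : I) × Fin (d1 a + d2 a)) → ℝ)
    (hσ1 : σ1 = ∑ x : (a : I) × Fin (d1 a + d2 a),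
      if x.2.val < d1 x.1 then e x else 0)
    (hσ2 : σ2 = ∑ x : (a : I) × Fin (d1 a + d2 a),
      if d1 x.1 ≤ x.2.val then e x else 0)
    -- R(d)^{λ>0}: the sum over all ordered pairs of vertices of the A-fold weights
    -- β^b_j − β^a_i with j in the d₁-block and i in the d₂-block
    (Rpos : ((a : I) × Fin (d1 a + d2 a)) → ℝ)
    (hR : Rpos = ∑ x : (a : I) × Fin (d1 a + d2 a),
      ∑ y : (a : I) × Fin (d1 a + d2 a),
        if x.2.val < d1 x.1 ∧ d1 y.1 ≤ y.2.val then (A : ℝ) • (e x - e y) else 0) :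
    Rpos = (A : ℝ) • (((∑ a : I, (d2 a : ℝ)) • σ1) - ((∑ a : I, (d1 a : ℝ)) • σ2))
    ∧ ∃ r1 r2 : ℝ,
      Rpos = r1 • ((∑ a : I, (d1 a : ℝ))⁻¹ • σ1) + r2 • ((∑ a : I, (d2 a : ℝ))⁻¹ • σ2) := by
  classical
  set S : Finset ((a : I) × Fin (d1 a + d2 a)) := univ.filter (fun x => x.2.val < d1 x.1) with hS
  set T : Finset ((a : I) × Fin (d1 a + d2 a)) := univ.filter (fun x => d1 x.1 ≤ x.2.val) with hT
  have huniv : (univ : Finset ((a : I) × Fin (d1 a + d2 a)))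
      = (univ : Finset I).sigma (fun a => (univ : Finset (Fin (d1 a + d2 a)))) :=
    (Finset.univ_sigma_univ).symm
  have hcardS : S.card = ∑ a, d1 a := by
    rw [hS, Finset.card_filter, huniv, Finset.sum_sigma]
    refine Finset.sum_congr rfl (fun a _ => ?_)
    rw [← Finset.card_filter]
    exact card_lt_block (d1 a) (d2 a)
  have hcardT : T.card = ∑ a, d2 a := by
    rw [hT, Finset.card_filter, huniv, Finset.sum_sigma]
    refine Finset.sum_congr rfl (fun a _ => ?_)
    rw [← Finset.card_filter]
    exact card_ge_block (d1 a) (d2 a)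
  have hσ1' : σ1 = ∑ x ∈ S, e x := by rw [hσ1, hS, Finset.sum_filter]
  have hσ2' : σ2 = ∑ x ∈ T, e x := by rw [hσ2, hT, Finset.sum_filter]
  have hR' : Rpos = (A : ℝ) • (((∑ a : I, (d2 a : ℝ)) • σ1) - ((∑ a : I, (d1 a : ℝ)) • σ2)) := by
    rw [hR]
    have step1 : ∀ x : (a : I) × Fin (d1 a + d2 a),
        (∑ y : (a : I) × Fin (d1 a + d2 a),
          if x.2.val < d1 x.1 ∧ d1 y.1 ≤ y.2.val then (A : ℝ) • (e x - e y) else 0)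
        = if x.2.val < d1 x.1 then (∑ y ∈ T, (A : ℝ) • (e x - e y)) else 0 := by
      intro x
      by_cases hx : x.2.val < d1 x.1
      · simp only [hx, true_and, if_true, hT, Finset.sum_filter]
      · simp [hx]
    rw [Finset.sum_congr rfl (fun x _ => step1 x), ← Finset.sum_filter, ← hS]
    have key : ∑ x ∈ S, ∑ y ∈ T, (A : ℝ) • (e x - e y)
        = (A : ℝ) • (T.card • (∑ x ∈ S, e x) - S.card • (∑ y ∈ T, e y)) :=
      calc ∑ x ∈ S, ∑ y ∈ T, (A : ℝ) • (e x - e y)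
          = ∑ x ∈ S, (A : ℝ) • ∑ y ∈ T, (e x - e y) := by
            refine Finset.sum_congr rfl (fun x _ => ?_)
            rw [Finset.smul_sum]
        _ = ∑ x ∈ S, (A : ℝ) • (T.card • e x - ∑ y ∈ T, e y) := by
            refine Finset.sum_congr rfl (fun x _ => ?_)
            rw [Finset.sum_sub_distrib, Finset.sum_const]
        _ = (A : ℝ) • (T.card • (∑ x ∈ S, e x) - S.card • (∑ y ∈ T, e y)) := by
            rw [← Finset.smul_sum]
            congr 1
            rw [Finset.sum_sub_distrib, ← Finset.smul_sum, Finset.sum_const]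
    rw [key, hcardS, hcardT, ← hσ1', ← hσ2', ← Nat.cast_sum, ← Nat.cast_sum]
    simp only [Nat.cast_smul_eq_nsmul]
  refine ⟨hR', ?_⟩
  have hN1 : (∑ a : I, (d1 a : ℝ)) ≠ 0 := by
    have hex : ∃ a, d1 a ≠ 0 := by
      by_contra h; push_neg at h; exact hd1 (funext h)
    obtain ⟨a, ha⟩ := hex
    have : (0:ℝ) < ∑ a : I, (d1 a : ℝ) := by
      apply Finset.sum_pos' (fun i _ => by positivity)
      exact ⟨a, Finset.mem_univ a, by positivity⟩
    linarith
  have hN2 : (∑ a : I, (d2 a : ℝ)) ≠ 0 := by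
    have hex : ∃ a, d2 a ≠ 0 := by
      by_contra h; push_neg at h; exact hd2 (funext h)
    obtain ⟨a, ha⟩ := hex
    have : (0:ℝ) < ∑ a : I, (d2 a : ℝ) := by
      apply Finset.sum_pos' (fun i _ => by positivity)
      exact ⟨a, Finset.mem_univ a, by positivity⟩
    linarith
  refine ⟨(A : ℝ) * (∑ a : I, (d2 a : ℝ)) * (∑ a : I, (d1 a : ℝ)),
          -((A : ℝ) * (∑ a : I, (d1 a : ℝ)) * (∑ a : I, (d2 a : ℝ))), ?_⟩
  rw [hR', smul_sub, smul_smul, smul_smul, smul_smul, smul_smul,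
    sub_eq_add_neg, ← neg_smul]
  congr 1
  · congr 1
    field_simp
    try ring
  · congr 1
    field_simp
    try ring
end

section
/- Let Q° be a quiver satisfying α_{a,b} ∈ 2ℤ for all a,b, with tripled quiver Q and W-polytope 𝐖 = (1/2)·Minkowski-sum of [0,β] over all weights β of \overline{R}(d) ⊕ 𝔤(d)_0. Let v ∈ ℤ with gcd(\underline{d}, v) = 1 and let χ ∈ M(d) be a dominant integral weight with χ + ρ − vτ_d ∈ 𝐖. Then χ + ρ − vτ_d does not lie on the boundary of 𝐖. More precisely: if χ + ρ − vτ_d lies on a face of 𝐖 cut out by an antidominant cocharacter λ corresponding to a nontrivial decomposition d = d_1 + ⋯ + d_k (k ≥ 2), then writing vτ_d = ∑_i v_i τ_{d_i} forces each v_i = \underline{d}_i v/\underline{d} to be an integer, contradicting gcd(\underline{d}, v) = 1. -/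
/-!
Sum the face identity over the coordinates of one block `d₁`. The `ψ`-terms drop out, and
`∑_{x ∈ d₁} (2ρ + R(d)^{λ>0})(x)` is even: modulo 2 the evenness of `α_{a,b}` kills the doubled
edges, so a coordinate at vertex `a` contributes `1 + d₁^a`, and `∑_a d₁^a (1 + d₁^a)` is even.
Hence `|d₁| · v / |d|` is an integer, which `gcd(v, |d|) = 1` and `0 < |d₁| < |d|` rule out.
-/

open Finset

/-- Weight-lattice index set of `T(d)` for a dimension vector partitioned into `k` blocks. -/
abbrev QIdx6 {I : Type} (k : ℕ) (dpart : Fin k → I → ℕ) : Type :=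
  (a : I) × (t : Fin k) × Fin (dpart t a)

theorem ne_natCast_mul_div_of_gcd_eq_one {v : ℤ} {s N : ℕ} (hcop : Int.gcd v N = 1)
    (hs : 0 < s) (hsN : s < N) (m : ℤ) : (m : ℝ) ≠ s * (v / N) := by
  intro h
  have hN : (N : ℝ) ≠ 0 := by exact_mod_cast (by omega : N ≠ 0)
  have hmul : (N : ℤ) * m = v * s := by
    field_simp at h
    exact_mod_cast (by linarith : (N : ℝ) * m = v * s)
  have hdvd : (N : ℤ) ∣ s :=
    Int.dvd_of_dvd_mul_right_of_gcd_one ⟨m, hmul.symm⟩ (by rwa [Int.gcd_comm])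
  exact absurd (Int.le_of_dvd (by positivity) hdvd) (by omega)

theorem even_sum_card_fiber_add_one {ι I : Type*} [DecidableEq I] (S : Finset ι) (π : ι → I) :
    Even (∑ x ∈ S, (#{y ∈ S | π y = π x} + 1)) := by
  rw [sum_comp (fun a => #{y ∈ S | π y = a} + 1) π]
  refine Finset.even_sum _ fun a _ => ?_
  rw [smul_eq_mul]
  exact Nat.even_mul_succ_self _

section Parity

variable {ι I α : Type*} [Fintype ι] [DecidableEq I] [LinearOrder α]

-- The `x`-coordinate of `R(d)^{λ>0}` for the tripled quiver: `π x` is the vertex of `x` and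
-- `γ x` the value of `λ` on it.
def rPosCoeff (π : ι → I) (γ : ι → α) (E : I → I → ℕ) (x : ι) : ℤ :=
  ∑ y, ((if γ y < γ x then ((E (π y) (π x) + E (π x) (π y) + if π x = π y then 1 else 0 : ℕ) : ℤ)
      else 0)
    - (if γ x < γ y then ((E (π x) (π y) + E (π y) (π x) + if π x = π y then 1 else 0 : ℕ) : ℤ)
      else 0))

theorem rPosCoeff_cast_zmod_two {E : I → I → ℕ} (hE : ∀ a b, Even ((E a b : ℤ) + E b a))
    (π : ι → I) (γ : ι → α) (x : ι) :
    (rPosCoeff π γ E x : ZMod 2) = #{y | π y = π x ∧ γ y ≠ γ x} := by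
  have hE2 : ∀ a b, (E a b : ZMod 2) + E b a = 0 := fun a b => by
    exact_mod_cast (ZMod.intCast_eq_zero_iff_even.mpr (hE a b))
  rw [card_filter, rPosCoeff]
  push_cast
  refine sum_congr rfl fun y _ => ?_
  rw [hE2, add_comm (E _ _ : ZMod 2), hE2]
  rcases lt_trichotomy (γ y) (γ x) with h | h | h
  · simp [h, h.ne, h.not_gt, eq_comm]
  · simp [h]
  · simp [h, h.ne', h.not_gt, eq_comm]

theorem even_sum_levelSet {E : I → I → ℕ} (hE : ∀ a b, Even ((E a b : ℤ) + E b a))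
    (π : ι → I) (γ : ι → α) (P : ι → ℤ) (g : α) :
    Even (∑ x ∈ {x | γ x = g}, (2 * P x - #{y | π y = π x} + 1 + rPosCoeff π γ E x)) := by
  set S : Finset ι := {x | γ x = g}
  have hterm : ∀ x ∈ S, ((2 * P x - #{y | π y = π x} + 1 + rPosCoeff π γ E x : ℤ) : ZMod 2)
      = ((#{y ∈ S | π y = π x} + 1 : ℕ) : ZMod 2) := by
    intro x hx
    have hx : γ x = g := (mem_filter.mp hx).2
    have hsplit : #{y | π y = π x} = #{y ∈ S | π y = π x} + #{y | π y = π x ∧ γ y ≠ γ x} := by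
      rw [← card_filter_add_card_filter_not (s := {y | π y = π x}) (fun y => γ y = γ x),
        filter_filter, filter_filter, filter_filter, hx]
      simp only [and_comm]
    rw [Int.cast_add, rPosCoeff_cast_zmod_two hE, hsplit]
    push_cast
    have h2 : (2 : ZMod 2) = 0 := rfl
    linear_combination (P x - #{y ∈ S | π y = π x}) * h2
  rw [← ZMod.intCast_eq_zero_iff_even, Int.cast_sum, sum_congr rfl hterm, ← Nat.cast_sum,
    ZMod.natCast_eq_zero_iff_even]
  exact even_sum_card_fiber_add_one S π

theorem exists_sum_levelSet_two_mul_rho_add_eq {E : I → I → ℕ}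
    (hE : ∀ a b, Even ((E a b : ℤ) + E b a)) (π : ι → I) (γ : ι → α) (g : α) (P : ι → ℕ)
    (ρ Rpos : ι → ℝ) (hρ : ∀ x, ρ x = (P x : ℝ) - ((#{y | π y = π x} : ℝ) - 1) / 2)
    (hR : ∀ x, Rpos x = ∑ y,
      ((if γ y < γ x then ((E (π y) (π x) + E (π x) (π y) + if π x = π y then 1 else 0 : ℕ) : ℝ)
          else 0)
        - (if γ x < γ y then ((E (π x) (π y) + E (π y) (π x) + if π x = π y then 1 else 0 : ℕ) : ℝ)
          else 0))) :
    ∃ m : ℤ, ∑ x ∈ {x | γ x = g}, (2 * ρ x + Rpos x) = 2 * m := by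
  obtain ⟨m, hm⟩ := even_sum_levelSet hE π γ (fun x => P x) g
  refine ⟨m, ?_⟩
  have hterm : ∀ x, 2 * ρ x + Rpos x
      = ((2 * P x - #{y | π y = π x} + 1 + rPosCoeff π γ E x : ℤ) : ℝ) := by
    intro x
    rw [hρ, hR, rPosCoeff]
    push_cast
    ring
  simp only [hterm, ← Int.cast_sum, hm]
  push_cast
  ring

end Parity

theorem sum_filter_sum_eq_zero {ι κ M : Type*} [Fintype ι] [Fintype κ] [DecidableEq κ]
    [AddCommMonoid M] (β : ι → κ) (ψ : κ → ι → M) (hsupp : ∀ t x, β x ≠ t → ψ t x = 0)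
    (hψ : ∀ t, ∑ x, ψ t x = 0) (t₀ : κ) :
    ∑ x ∈ {x | β x = t₀}, ∑ t, ψ t x = 0 := by
  rw [sum_comm]
  refine sum_eq_zero fun t _ => ?_
  by_cases ht : t = t₀
  · subst ht
    rw [sum_filter_of_ne fun x _ hx => not_not.mp (mt (hsupp _ x) hx), hψ]
  · exact sum_eq_zero fun x hx => hsupp t x ((mem_filter.mp hx).2 ▸ Ne.symm ht)

theorem exists_qIdx6_block_eq {I : Type} {k : ℕ} {dpart : Fin k → I → ℕ} {t : Fin k}
    (ht : dpart t ≠ 0) : ∃ x : QIdx6 k dpart, x.2.1 = t := by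
  obtain ⟨a, ha⟩ := Function.ne_iff.mp ht
  exact ⟨⟨a, t, ⟨0, Nat.pos_of_ne_zero ha⟩⟩, rfl⟩

theorem stmt6_general {I : Type} [Fintype I] [DecidableEq I]
    (E : I → I → ℕ)
    -- Assumption: α_{a,b} = #(a→b) + #(b→a) − 2δ_{ab} is even for all a, b
    (hα : ∀ a b : I, Even ((E a b : ℤ) + E b a - if a = b then 2 else 0))
    (k : ℕ) (hk : 2 ≤ k)
    (dpart : Fin k → I → ℕ) (hpart : ∀ t, dpart t ≠ 0)
    (c : Fin k → ℤ) (hc : StrictAnti c)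
    (v : ℤ)
    -- gcd(\underline{d}, v) = 1
    (hcop : Int.gcd v (Fintype.card (QIdx6 k dpart)) = 1)
    (χ : QIdx6 k dpart → ℤ)
    -- ρ, half the sum of the positive roots of 𝔤(d)
    (ρ : QIdx6 k dpart → ℝ)
    (hρ : ∀ x : QIdx6 k dpart, ρ x =
      (((univ.filter (fun y : QIdx6 k dpart => y.1 = x.1 ∧
        (y.2.1 < x.2.1 ∨ (y.2.1 = x.2.1 ∧ y.2.2.val < x.2.2.val)))).card : ℝ))
      - (((univ.filter (fun y : QIdx6 k dpart => y.1 = x.1)).card : ℝ) - 1) / 2)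
    -- R(d)^{λ>0} for the tripled quiver Q of Q° (doubled edges plus one loop per vertex)
    (Rpos : QIdx6 k dpart → ℝ)
    (hR : ∀ x : QIdx6 k dpart, Rpos x = ∑ y : QIdx6 k dpart,
      ((if c y.2.1 < c x.2.1 then
          ((E y.1 x.1 + E x.1 y.1 + if x.1 = y.1 then 1 else 0 : ℕ) : ℝ) else 0)
      - (if c x.2.1 < c y.2.1 then
          ((E x.1 y.1 + E y.1 x.1 + if x.1 = y.1 then 1 else 0 : ℕ) : ℝ) else 0)))
    -- the weights ψᵢ, supported on the i-th block, with ⟨1_{d_i}, ψᵢ⟩ = 0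
    (ψ : Fin k → QIdx6 k dpart → ℝ)
    (hψsupp : ∀ (t : Fin k) (x : QIdx6 k dpart), x.2.1 ≠ t → ψ t x = 0)
    (hψ0 : ∀ t : Fin k, ∑ x : QIdx6 k dpart, ψ t x = 0)
    -- the face decomposition χ + ρ = −(1/2)R(d)^{λ>0} + ∑ᵢ ψᵢ + v τ_d
    (hiden : ∀ x : QIdx6 k dpart, (χ x : ℝ) + ρ x =
      -(1/2) * Rpos x + (∑ t : Fin k, ψ t x)
        + (v : ℝ) / (Fintype.card (QIdx6 k dpart))) :
    False := by
  set N := Fintype.card (QIdx6 k dpart)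
  let t₀ : Fin k := ⟨0, by omega⟩
  let t₁ : Fin k := ⟨1, by omega⟩
  let S : Finset (QIdx6 k dpart) := {x | x.2.1 = t₀}
  have hS_pos : 0 < #S := by
    obtain ⟨x, hx⟩ := exists_qIdx6_block_eq (hpart t₀)
    exact card_pos.mpr ⟨x, mem_filter.mpr ⟨mem_univ x, hx⟩⟩
  have hS_lt : #S < N := by
    obtain ⟨x, hx⟩ := exists_qIdx6_block_eq (hpart t₁)
    refine card_lt_univ_of_notMem (x := x) fun hxS => ?_
    have : t₁ = t₀ := hx.symm.trans (mem_filter.mp hxS).2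
    simp [t₀, t₁, Fin.ext_iff] at this
  have hE : ∀ a b, Even ((E a b : ℤ) + E b a) := fun a b => by
    simpa using (hα a b).add (show Even (if a = b then (2 : ℤ) else 0) by split_ifs <;> simp)
  obtain ⟨m, hm⟩ : ∃ m : ℤ, ∑ x ∈ S, (2 * ρ x + Rpos x) = 2 * m := by
    have hS_level : S = ({x | c x.2.1 = c t₀} : Finset (QIdx6 k dpart)) := by
      simp only [S, hc.injective.eq_iff]
    rw [hS_level]
    exact exists_sum_levelSet_two_mul_rho_add_eq hE Sigma.fst (fun x => c x.2.1) (c t₀) _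
      ρ Rpos hρ hR
  have hψS : ∑ x ∈ S, ∑ t, ψ t x = 0 :=
    sum_filter_sum_eq_zero (fun x : QIdx6 k dpart => x.2.1) ψ hψsupp hψ0 t₀
  refine ne_natCast_mul_div_of_gcd_eq_one hcop hS_pos hS_lt (∑ x ∈ S, χ x + m) ?_
  have hsum := congrArg (fun f => ∑ x ∈ S, f x) (funext hiden)
  simp only [sum_add_distrib, ← mul_sum, hψS, sum_const, nsmul_eq_mul] at hsum
  rw [sum_add_distrib, ← mul_sum] at hm
  push_cast
  linear_combination hsum - hm / 2

/-- Lemma on the boundary of the polytope 𝐖: let `Q°` satisfy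
`α_{a,b} ∈ 2ℤ` for all `a,b`, with tripled quiver `Q`, let `gcd(\underline{d}, v) = 1`, and let
`χ` be a dominant integral weight with `χ + ρ − vτ_d ∈ 𝐖`. If `χ + ρ − vτ_d` lies on a face
of `𝐖` cut out by an antidominant cocharacter `λ` (block values `c`) corresponding to a
nontrivial decomposition `d = d₁ + ⋯ + d_k`, `k ≥ 2` — i.e. if one can write
`χ + ρ = −(1/2)R(d)^{λ>0} + ∑ᵢ ψᵢ + v τ_d` with `ψᵢ` supported on the `i`-th block and of
coefficient sum zero — then one gets a contradiction: `χ + ρ − vτ_d` is not on the boundary. -/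
theorem stmt6 {I : Type} [Fintype I] [DecidableEq I]
    (E : I → I → ℕ)
    -- Assumption: α_{a,b} = #(a→b) + #(b→a) − 2δ_{ab} is even for all a, b
    (hα : ∀ a b : I, Even ((E a b : ℤ) + E b a - if a = b then 2 else 0))
    (k : ℕ) (hk : 2 ≤ k)
    (dpart : Fin k → I → ℕ) (hpart : ∀ t, dpart t ≠ 0)
    (c : Fin k → ℤ) (hc : StrictAnti c)
    (v : ℤ)
    -- gcd(\underline{d}, v) = 1
    (hcop : Int.gcd v (Fintype.card (QIdx6 k dpart)) = 1)
    (χ : QIdx6 k dpart → ℤ)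
    -- χ is dominant
    (hdom : ∀ (a : I) (p q : (t : Fin k) × Fin (dpart t a)),
      (p.1 < q.1 ∨ (p.1 = q.1 ∧ p.2.val < q.2.val)) → χ ⟨a, p⟩ ≤ χ ⟨a, q⟩)
    -- ρ, half the sum of the positive roots of 𝔤(d)
    (ρ : QIdx6 k dpart → ℝ)
    (hρ : ∀ x : QIdx6 k dpart, ρ x =
      (((univ.filter (fun y : QIdx6 k dpart => y.1 = x.1 ∧
        (y.2.1 < x.2.1 ∨ (y.2.1 = x.2.1 ∧ y.2.2.val < x.2.2.val)))).card : ℝ))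
      - (((univ.filter (fun y : QIdx6 k dpart => y.1 = x.1)).card : ℝ) - 1) / 2)
    -- R(d)^{λ>0} for the tripled quiver Q of Q° (doubled edges plus one loop per vertex)
    (Rpos : QIdx6 k dpart → ℝ)
    (hR : ∀ x : QIdx6 k dpart, Rpos x = ∑ y : QIdx6 k dpart,
      ((if c y.2.1 < c x.2.1 then
          ((E y.1 x.1 + E x.1 y.1 + if x.1 = y.1 then 1 else 0 : ℕ) : ℝ) else 0)
      - (if c x.2.1 < c y.2.1 then
          ((E x.1 y.1 + E y.1 x.1 + if x.1 = y.1 then 1 else 0 : ℕ) : ℝ) else 0)))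
    -- the weights ψᵢ, supported on the i-th block, with ⟨1_{d_i}, ψᵢ⟩ = 0
    (ψ : Fin k → QIdx6 k dpart → ℝ)
    (hψsupp : ∀ (t : Fin k) (x : QIdx6 k dpart), x.2.1 ≠ t → ψ t x = 0)
    (hψ0 : ∀ t : Fin k, ∑ x : QIdx6 k dpart, ψ t x = 0)
    -- the face decomposition χ + ρ = −(1/2)R(d)^{λ>0} + ∑ᵢ ψᵢ + v τ_d
    (hiden : ∀ x : QIdx6 k dpart, (χ x : ℝ) + ρ x =
      -(1/2) * Rpos x + (∑ t : Fin k, ψ t x)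
        + (v : ℝ) / (Fintype.card (QIdx6 k dpart))) :
    False :=
  stmt6_general E hα k hk dpart hpart c hc v hcop χ ρ hρ Rpos hR ψ hψsupp hψ0 hiden
end
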